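/- arXiv:2010.14013 — 2 statements merged into one kernel-verified Lean document; each statement's English description precedes it below -/
import Mathlib

section
/- Let f be a monotone submodular set function on subsets of a finite ground set X with f(∅) = 0. Let Y_0 = ∅ and Y_{i+1} = Y_i ∪ {x_{i+1}} where x_{i+1} maximizes the marginal gain Δ(x | Y_i) = f(Y_i ∪ {x}) − f(Y_i) over x ∈ X \ Y_i. Let Y* be any subset of X of size M with value OPT = f(Y*). Then for each i < M, the greedy marginal gain satisfies Δ(x_{i+1} | Y_i) ≥ (OPT − f(Y_i)) / M. -/
open scoped RealInnerProductSpace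

private lemma subadd_aux {α : Type*} [DecidableEq α]
    (f : Finset α → ℝ)
    (hsub : ∀ Y Z : Finset α, Y ⊆ Z → ∀ i ∉ Z, f (insert i Y) - f Y ≥ f (insert i Z) - f Z)
    (B : Finset α) : ∀ S : Finset α,
    f (B ∪ S) - f B ≤ ∑ x ∈ S \ B, (f (insert x B) - f B) := by
  intro S
  induction S using Finset.induction with
  | empty => simp
  | @insert a S ha ih =>
    by_cases haB : a ∈ B
    · have h1 : B ∪ insert a S = B ∪ S := by
        ext y; simp only [Finset.mem_union, Finset.mem_insert]
        constructor
        · rintro (h | rfl | h) <;> simp [*]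
        · rintro (h | h) <;> simp [*]
      have h2 : insert a S \ B = S \ B := by
        ext y; simp only [Finset.mem_sdiff, Finset.mem_insert]
        constructor
        · rintro ⟨rfl | h, hy⟩
          · exact absurd haB hy
          · exact ⟨h, hy⟩
        · rintro ⟨h, hy⟩; exact ⟨Or.inr h, hy⟩
      rw [h1, h2]; exact ih
    · by_cases haS : a ∈ B ∪ S
      · simp [Finset.mem_union, haB, ha] at haS
      have h1 : B ∪ insert a S = insert a (B ∪ S) := by
        ext y; simp only [Finset.mem_union, Finset.mem_insert]; tauto
      have h2 : insert a S \ B = insert a (S \ B) := by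
        ext y; simp only [Finset.mem_sdiff, Finset.mem_insert]
        constructor
        · rintro ⟨rfl | h, hy⟩
          · exact Or.inl rfl
          · exact Or.inr ⟨h, hy⟩
        · rintro (rfl | ⟨h, hy⟩)
          · exact ⟨Or.inl rfl, haB⟩
          · exact ⟨Or.inr h, hy⟩
      have haSB : a ∉ S \ B := by simp [ha]
      rw [h1, h2, Finset.sum_insert haSB]
      have key := hsub B (B ∪ S) Finset.subset_union_left a haS
      linarith

/-- The greedy marginal gain at each step is at least (OPT - f(Y_i)) / M. -/
theorem greedy_marginal_gain {α : Type*} [Fintype α] [DecidableEq α]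
    (f : Finset α → ℝ)
    (hmono : ∀ Y Z : Finset α, Y ⊆ Z → f Y ≤ f Z)
    (hsub : ∀ Y Z : Finset α, Y ⊆ Z → ∀ i ∉ Z, f (insert i Y) - f Y ≥ f (insert i Z) - f Z)
    (hempty : f ∅ = 0)
    (M : ℕ) (hM : 1 ≤ M) (hMcard : M ≤ Fintype.card α)
    (Y : ℕ → Finset α) (hY0 : Y 0 = ∅)
    (hstep : ∀ i < M, ∃ x ∉ Y i, Y (i + 1) = insert x (Y i) ∧
      ∀ w ∉ Y i, f (insert w (Y i)) ≤ f (Y (i + 1)))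
    (Ystar : Finset α) (hYstar : Ystar.card = M) :
    ∀ i < M, f (Y (i + 1)) - f (Y i) ≥ (f Ystar - f (Y i)) / M := by
  intro i hi
  obtain ⟨x, hx, hYi1, hmax⟩ := hstep i hi
  set g := f (Y (i + 1)) - f (Y i) with hg
  have hg0 : 0 ≤ g := by
    have : f (Y i) ≤ f (Y (i + 1)) := by
      rw [hYi1]; exact hmono _ _ (Finset.subset_insert _ _)
    linarith
  -- bound each term of the sum
  have hterm : ∀ w ∈ Ystar \ Y i, f (insert w (Y i)) - f (Y i) ≤ g := by
    intro w hw
    have hwY : w ∉ Y i := (Finset.mem_sdiff.mp hw).2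
    have := hmax w hwY
    simp only [hg]; linarith
  have hsum := subadd_aux f hsub (Y i) Ystar
  have hcard : (Ystar \ Y i).card ≤ M := by
    calc (Ystar \ Y i).card ≤ Ystar.card := Finset.card_le_card (Finset.sdiff_subset)
    _ = M := hYstar
  have hsum2 : ∑ x ∈ Ystar \ Y i, (f (insert x (Y i)) - f (Y i)) ≤ M * g := by
    calc ∑ x ∈ Ystar \ Y i, (f (insert x (Y i)) - f (Y i))
        ≤ ∑ _x ∈ Ystar \ Y i, g := Finset.sum_le_sum hterm
      _ = (Ystar \ Y i).card * g := by rw [Finset.sum_const, nsmul_eq_mul]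
      _ ≤ M * g := by
          apply mul_le_mul_of_nonneg_right _ hg0
          exact_mod_cast hcard
  have hmono2 : f Ystar ≤ f (Y i ∪ Ystar) := hmono _ _ Finset.subset_union_right
  have hMpos : (0:ℝ) < M := by exact_mod_cast hM
  rw [ge_iff_le, div_le_iff₀ hMpos]
  nlinarith
end

section
/- (Greedy guarantee) Let f be a monotone submodular set function on subsets of a finite ground set X with f(∅) = 0 and f nonnegative. Let Y_M be the set of size M produced by the greedy algorithm that at each step adds an element of maximal marginal gain, and let OPT = max over subsets Y ⊆ X of size M of f(Y). Then f(Y_M) ≥ (1 − 1/e) · OPT. -/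
open scoped RealInnerProductSpace

lemma greedy_union_bound {α : Type*} [DecidableEq α]
    (f : Finset α → ℝ)
    (hmono : ∀ Y Z : Finset α, Y ⊆ Z → f Y ≤ f Z)
    (hsub : ∀ Y Z : Finset α, Y ⊆ Z → ∀ i ∉ Z, f (insert i Y) - f Y ≥ f (insert i Z) - f Z)
    (B : Finset α) :
    ∀ S : Finset α, f (B ∪ S) ≤ f B + ∑ x ∈ S, (f (insert x B) - f B) := by
  intro S
  induction S using Finset.induction with
  | empty => simp
  | @insert a S ha ih =>
    rw [Finset.sum_insert ha]
    have hnn : 0 ≤ f (insert a B) - f B := by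
      have := hmono B (insert a B) (Finset.subset_insert _ _)
      linarith
    by_cases haB : a ∈ B ∪ S
    · have heq : B ∪ insert a S = B ∪ S := by
        ext y; simp only [Finset.mem_union, Finset.mem_insert]
        constructor
        · rintro (h | rfl | h)
          · exact Or.inl h
          · simpa using haB
          · exact Or.inr h
        · rintro (h | h)
          · exact Or.inl h
          · exact Or.inr (Or.inr h)
      rw [heq]
      linarith
    · have h1 := hsub B (B ∪ S) Finset.subset_union_left a haB
      have heq : B ∪ insert a S = insert a (B ∪ S) := by
        rw [Finset.union_insert]
      rw [heq]
      linarith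

/-- The greedy algorithm achieves a (1 - 1/e)-approximation for monotone
submodular maximization under a cardinality constraint. -/
theorem greedy_guarantee {α : Type*} [Fintype α] [DecidableEq α]
    (f : Finset α → ℝ)
    (hmono : ∀ Y Z : Finset α, Y ⊆ Z → f Y ≤ f Z)
    (hsub : ∀ Y Z : Finset α, Y ⊆ Z → ∀ i ∉ Z, f (insert i Y) - f Y ≥ f (insert i Z) - f Z)
    (hempty : f ∅ = 0) (hnonneg : ∀ S : Finset α, 0 ≤ f S)
    (M : ℕ) (hM : 1 ≤ M) (hMcard : M ≤ Fintype.card α)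
    (Y : ℕ → Finset α) (hY0 : Y 0 = ∅)
    (hstep : ∀ i < M, ∃ x ∉ Y i, Y (i + 1) = insert x (Y i) ∧
      ∀ w ∉ Y i, f (insert w (Y i)) ≤ f (Y (i + 1))) :
    ∀ Ystar : Finset α, Ystar.card = M →
      f (Y M) ≥ (1 - 1 / Real.exp 1) * f Ystar := by
  intro Ystar hcard
  set OPT := f Ystar with hOPT
  have hOPTnn : 0 ≤ OPT := hnonneg _
  have hMpos : (0:ℝ) < (M:ℝ) := by positivity
  have hr : (0:ℝ) ≤ 1 - 1 / (M:ℝ) := by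
    rw [sub_nonneg, div_le_one hMpos]
    exact_mod_cast hM
  -- main inductive bound
  have key : ∀ i ≤ M, OPT - f (Y i) ≤ (1 - 1/(M:ℝ))^i * OPT := by
    intro i
    induction i with
    | zero => intro _; simp [hY0, hempty]
    | succ i ih =>
      intro hiM
      have hiM' : i < M := hiM
      have hle : i ≤ M := le_of_lt hiM'
      obtain ⟨x, hx, heq, hmax⟩ := hstep i hiM'
      set g := f (Y (i+1)) - f (Y i) with hg
      have hgnn : 0 ≤ g := by
        have := hmono (Y i) (Y (i+1)) (by rw [heq]; exact Finset.subset_insert _ _)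
        simp [hg]; linarith
      -- each marginal is at most g
      have hterm : ∀ w ∈ Ystar, f (insert w (Y i)) - f (Y i) ≤ g := by
        intro w _
        by_cases hw : w ∈ Y i
        · rw [Finset.insert_eq_self.mpr hw]; simpa using hgnn
        · have := hmax w hw; simp [hg]; linarith
      have hsum : ∑ w ∈ Ystar, (f (insert w (Y i)) - f (Y i)) ≤ (M:ℝ) * g := by
        calc ∑ w ∈ Ystar, (f (insert w (Y i)) - f (Y i))
            ≤ ∑ _w ∈ Ystar, g := Finset.sum_le_sum hterm
          _ = (M:ℝ) * g := by rw [Finset.sum_const, hcard, nsmul_eq_mul]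
      have hub := greedy_union_bound f hmono hsub (Y i) Ystar
      have hopt_le : OPT ≤ f (Y i ∪ Ystar) :=
        hmono _ _ Finset.subset_union_right
      have hMg : OPT - f (Y i) ≤ (M:ℝ) * g := by linarith
      -- OPT - f(Y(i+1)) = OPT - f(Y i) - g ≤ (1 - 1/M)(OPT - f(Y i))
      have hstepineq : OPT - f (Y (i+1)) ≤ (1 - 1/(M:ℝ)) * (OPT - f (Y i)) := by
        have : (OPT - f (Y i)) / (M:ℝ) ≤ g := by
          rw [div_le_iff₀ hMpos]; linarith [hMg]
        have hexp : (1 - 1/(M:ℝ)) * (OPT - f (Y i))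
            = (OPT - f (Y i)) - (OPT - f (Y i)) / (M:ℝ) := by
          field_simp
        rw [hexp]
        simp only [hg] at this ⊢
        linarith
      calc OPT - f (Y (i+1)) ≤ (1 - 1/(M:ℝ)) * (OPT - f (Y i)) := hstepineq
        _ ≤ (1 - 1/(M:ℝ)) * ((1 - 1/(M:ℝ))^i * OPT) :=
            mul_le_mul_of_nonneg_left (ih hle) hr
        _ = (1 - 1/(M:ℝ))^(i+1) * OPT := by ring
  have hfinal := key M le_rfl
  -- (1 - 1/M)^M ≤ exp(-1)
  have hpow : (1 - 1/(M:ℝ))^M ≤ Real.exp (-1) := by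
    have h1 : 1 - 1/(M:ℝ) ≤ Real.exp (-(1/(M:ℝ))) := by
      have := Real.add_one_le_exp (-(1/(M:ℝ)))
      linarith
    calc (1 - 1/(M:ℝ))^M ≤ (Real.exp (-(1/(M:ℝ))))^M :=
          pow_le_pow_left₀ hr h1 M
      _ = Real.exp ((M:ℝ) * (-(1/(M:ℝ)))) := (Real.exp_nat_mul _ M).symm
      _ = Real.exp (-1) := by
          congr 1
          field_simp
  have hpowOPT : (1 - 1/(M:ℝ))^M * OPT ≤ Real.exp (-1) * OPT :=
    mul_le_mul_of_nonneg_right hpow hOPTnn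
  have hexp_neg : Real.exp (-1) = 1 / Real.exp 1 := by
    rw [Real.exp_neg]; ring
  rw [ge_iff_le]
  have : OPT - f (Y M) ≤ (1 / Real.exp 1) * OPT := by
    rw [← hexp_neg]; linarith
  linarith
end
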